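/- arXiv:2002.10973 — 9 statements merged into one kernel-verified Lean document; each statement's English description precedes it below -/
import Mathlib

section
/- For every finite family of full monomials (m_j)_{j∈J} over a finite set of ports P, there exists a unique configuration γ̄ ∈ C(P) such that for every configuration γ ∈ C(P): γ satisfies the PCL formula ∑_{j∈J} m_j if and only if γ = γ̄. Concretely, γ̄ = {a_j : j ∈ J} where a_j is the unique interaction satisfying m_j. -/
/-- Syntax of propositional interaction logic (PIL) over a set of ports `P`. -/
inductive PIL (P : Type) where
  | tt : PIL P
  | port : P → PIL P
  | neg : PIL P → PIL P
  | disj : PIL P → PIL P → PIL P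

/-- Satisfaction of a PIL formula by an interaction (a finite set of ports). -/
def PILsat {P : Type} (α : Finset P) : PIL P → Prop
  | .tt => True
  | .port p => p ∈ α
  | .neg φ => ¬ PILsat α φ
  | .disj φ ψ => PILsat α φ ∨ PILsat α ψ

/-- Syntax of propositional configuration logic (PCL) over ports `P`. -/
inductive PCL (P : Type) where
  | tt : PCL P
  | pil : PIL P → PCL P
  | neg : PCL P → PCL P
  | union : PCL P → PCL P → PCL P
  | coal : PCL P → PCL P → PCL P

/-- Satisfaction of a PCL formula by a configuration (a finite set of interactions). -/
def PCLsat {P : Type} [DecidableEq P] : Finset (Finset P) → PCL P → Prop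
  | _, .tt => True
  | γ, .pil φ => ∀ a ∈ γ, PILsat a φ
  | γ, .neg f => ¬ PCLsat γ f
  | γ, .union f g => PCLsat γ f ∨ PCLsat γ g
  | γ, .coal f g => ∃ γ₁ γ₂ : Finset (Finset P),
      γ₁.Nonempty ∧ γ₂.Nonempty ∧ γ₁ ∪ γ₂ = γ ∧ PCLsat γ₁ f ∧ PCLsat γ₂ g

/-- Syntax of weighted PCL over ports `P` and a pv-monoid with carrier `D`. -/
inductive WPCL (P D : Type) where
  | const : D → WPCL P D
  | pcl : PCL P → WPCL P D
  | oplus : WPCL P D → WPCL P D → WPCL P D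
  | otimes : WPCL P D → WPCL P D → WPCL P D
  | coal : WPCL P D → WPCL P D → WPCL P D
  | star : WPCL P D → WPCL P D

open scoped Classical in
/-- Semantics of weighted PCL formulas.  The pv-monoid is given by an additive
commutative monoid `D` (the `⊕` operation and `0`), a multiplication `ot` (`⊗`),
a unit `one` and a symmetric valuation function `val` on nonempty multisets. -/
noncomputable def sem {P D : Type} [DecidableEq P] [AddCommMonoid D]
    (ot : D → D → D) (one : D) (val : Multiset D → D) :
    WPCL P D → Finset (Finset P) → D
  | .const d, _ => d
  | .pcl f, γ => if PCLsat γ f then one else 0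
  | .oplus ζ₁ ζ₂, γ => sem ot one val ζ₁ γ + sem ot one val ζ₂ γ
  | .otimes ζ₁ ζ₂, γ => ot (sem ot one val ζ₁ γ) (sem ot one val ζ₂ γ)
  | .coal ζ₁ ζ₂, γ =>
      ∑ p ∈ (γ.powerset ×ˢ γ.powerset).filter
        (fun p => p.1.Nonempty ∧ p.2.Nonempty ∧ Disjoint p.1 p.2 ∧ p.1 ∪ p.2 = γ),
        ot (sem ot one val ζ₁ p.1) (sem ot one val ζ₂ p.2)
  | .star ζ, γ =>
      ∑ Q ∈ γ.powerset.powerset.filter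
        (fun Q => Q.Nonempty ∧ (∀ x ∈ Q, x.Nonempty) ∧
          (∀ x ∈ Q, ∀ y ∈ Q, x ≠ y → Disjoint x y) ∧ Q.sup id = γ),
        val (Q.val.map (fun x => sem ot one val ζ x))

/-- `γ` is a configuration: a nonempty set of (nonempty) interactions. -/
def Config {P : Type} (γ : Finset (Finset P)) : Prop :=
  γ.Nonempty ∧ ∀ a ∈ γ, a.Nonempty

/-- The axioms of an (idempotent) product valuation monoid, on top of the
additive commutative monoid structure `(D, +, 0)`. -/
structure IsPVM (D : Type) [AddCommMonoid D]
    (ot : D → D → D) (one : D) (val : Multiset D → D) : Prop where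
  zero_ot : ∀ d, ot 0 d = 0
  ot_zero : ∀ d, ot d 0 = 0
  one_ot : ∀ d, ot one d = d
  ot_one : ∀ d, ot d one = d
  val_singleton : ∀ d, val {d} = d
  val_zero : ∀ m : Multiset D, (0 : D) ∈ m → val m = 0
  val_one : ∀ n : ℕ, 1 ≤ n → val (Multiset.replicate n one) = one
  idem : ∀ d : D, d + d = d

/-- The wclosure `∼ζ := ζ ⊕ (ζ ⊎ 1)` of a weighted PCL formula. -/
def wclosure {P D : Type} (one : D) (ζ : WPCL P D) : WPCL P D :=
  ζ.oplus (ζ.coal (.const one))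


/-- Conjunction of PIL formulas, defined via negation and disjunction. -/
noncomputable def PIL.conj {P : Type} (f g : PIL P) : PIL P := .neg (.disj (.neg f) (.neg g))

/-- The characteristic (full) monomial of an interaction `a`: the conjunction of
all ports in `a` and the negations of all ports not in `a`. -/
noncomputable def charMonomial {P : Type} [Fintype P] [DecidableEq P] (a : Finset P) : PIL P :=
  (Finset.univ.toList.map
    (fun p => if p ∈ a then PIL.port p else PIL.neg (PIL.port p))).foldr PIL.conj PIL.tt

/-- The PCL coalescing sum `∑ⱼ mⱼ` of the full monomials determined by a
(nonempty) list of interactions. -/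
noncomputable def pclSum {P : Type} [Fintype P] [DecidableEq P] : List (Finset P) → PCL P
  | [] => PCL.tt
  | [a] => PCL.pil (charMonomial a)
  | a :: rest => PCL.coal (PCL.pil (charMonomial a)) (pclSum rest)

/-!
A full monomial is satisfied by exactly one interaction `a`, so as a PCL formula it holds on
exactly one configuration, `{a}`. Coalescing two formulas that each hold on exactly one
configuration yields a formula holding on exactly their union, and induction along the list
gives `l.toFinset`.
-/

@[simp]
theorem PILsat_conj {P : Type} (α : Finset P) (f g : PIL P) :
    PILsat α (PIL.conj f g) ↔ PILsat α f ∧ PILsat α g := by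
  simp [PIL.conj, PILsat]

theorem PILsat_foldr_conj {P : Type} (α : Finset P) (L : List (PIL P)) :
    PILsat α (L.foldr PIL.conj PIL.tt) ↔ ∀ f ∈ L, PILsat α f := by
  induction L with
  | nil => simp [PILsat]
  | cons f L ih => simp [ih]

theorem PILsat_charMonomial {P : Type} [Fintype P] [DecidableEq P] (α a : Finset P) :
    PILsat α (charMonomial a) ↔ α = a := by
  have literal (p : P) :
      PILsat α (if p ∈ a then PIL.port p else PIL.neg (PIL.port p)) ↔ (p ∈ α ↔ p ∈ a) := by
    by_cases hp : p ∈ a <;> simp [hp, PILsat]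
  simp [charMonomial, PILsat_foldr_conj, literal, Finset.ext_iff]

theorem PCLsat_pil_charMonomial {P : Type} [Fintype P] [DecidableEq P]
    {γ : Finset (Finset P)} (hγ : γ.Nonempty) (a : Finset P) :
    PCLsat γ (PCL.pil (charMonomial a)) ↔ γ = {a} := by
  simp only [PCLsat, PILsat_charMonomial]
  exact ⟨fun h => Finset.eq_singleton_iff_nonempty_unique_mem.mpr ⟨hγ, h⟩,
    fun h b hb => by simpa [h] using hb⟩

theorem PCLsat_pclSum {P : Type} [Fintype P] [DecidableEq P] {l : List (Finset P)}
    (hl : l ≠ []) {γ : Finset (Finset P)} (hγ : γ.Nonempty) :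
    PCLsat γ (pclSum l) ↔ γ = l.toFinset := by
  induction l generalizing γ with
  | nil => exact absurd rfl hl
  | cons a rest ih =>
    cases rest with
    | nil => simpa [pclSum] using PCLsat_pil_charMonomial hγ a
    | cons b rest =>
      have hrest : ((b :: rest).toFinset).Nonempty := ⟨b, by simp⟩
      rw [pclSum.eq_3 a (b :: rest) (List.cons_ne_nil b rest), PCLsat, List.toFinset_cons, Finset.insert_eq]
      constructor
      · rintro ⟨γ₁, γ₂, h₁, h₂, rfl, hs₁, hs₂⟩
        rw [PCLsat_pil_charMonomial h₁] at hs₁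
        rw [ih (List.cons_ne_nil b rest) h₂] at hs₂
        rw [hs₁, hs₂]
      · rintro rfl
        exact ⟨{a}, _, Finset.singleton_nonempty a, hrest, rfl,
          (PCLsat_pil_charMonomial (Finset.singleton_nonempty a) a).mpr rfl,
          (ih (List.cons_ne_nil b rest) hrest).mpr rfl⟩

theorem stmt6_general {P : Type} [Fintype P] [DecidableEq P]
    (l : List (Finset P)) (hl : l ≠ []) (hne : ∀ a ∈ l, a.Nonempty) :
    ∃! γb : Finset (Finset P), Config γb ∧
      (∀ γ : Finset (Finset P), Config γ → (PCLsat γ (pclSum l) ↔ γ = γb)) ∧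
      γb = l.toFinset := by
  have hconfig : Config l.toFinset :=
    ⟨List.toFinset_nonempty_iff l |>.mpr hl, fun a ha => hne a (List.mem_toFinset.mp ha)⟩
  refine ⟨l.toFinset, ⟨hconfig, fun γ hγ => PCLsat_pclSum hl hγ.1, rfl⟩, ?_⟩
  rintro γb ⟨-, -, rfl⟩
  rfl

theorem stmt6 {P : Type} [Fintype P] [DecidableEq P] [Nonempty P]
    (l : List (Finset P)) (hl : l ≠ []) (hne : ∀ a ∈ l, a.Nonempty) :
    ∃! γb : Finset (Finset P), Config γb ∧
      (∀ γ : Finset (Finset P), Config γ → (PCLsat γ (pclSum l) ↔ γ = γb)) ∧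
      γb = l.toFinset :=
  stmt6_general l hl hne
end

section
/- Let D be a pv-monoid and let ζ be a w_pvm-PCL formula over ports P and D. Then for every configuration γ ∈ C(P), the semantics of the closure ∼ζ := ζ ⊕ (ζ ⊎ 1) satisfies ‖∼ζ‖(γ) = ⊕_{γ' ⊆ γ, γ' ≠ ∅} ‖ζ‖(γ'). -/
namespace Finset

variable {α M : Type*} [DecidableEq α] [AddCommMonoid M]

/-- The index set of the sum defining the semantics of `⊎`. -/
def splittings (s : Finset α) : Finset (Finset α × Finset α) :=
  (s.powerset ×ˢ s.powerset).filter
    (fun p => p.1.Nonempty ∧ p.2.Nonempty ∧ Disjoint p.1 p.2 ∧ p.1 ∪ p.2 = s)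

theorem mem_splittings {s : Finset α} {p : Finset α × Finset α} :
    p ∈ s.splittings ↔ p.1.Nonempty ∧ p.1 ⊂ s ∧ p.2 = s \ p.1 := by
  obtain ⟨a, b⟩ := p
  simp only [splittings, mem_filter, mem_product, mem_powerset]
  constructor
  · rintro ⟨-, ha, ⟨x, hx⟩, hab, rfl⟩
    refine ⟨ha, ssubset_iff_subset_ne.2 ⟨subset_union_left, fun h => ?_⟩,
      (union_sdiff_cancel_left hab).symm⟩
    exact disjoint_left.1 hab (h ▸ mem_union_right a hx) hx
  · rintro ⟨ha, has, rfl⟩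
    exact ⟨⟨has.subset, sdiff_subset⟩, ha, sdiff_nonempty.2 has.not_subset, disjoint_sdiff,
      union_sdiff_of_subset has.subset⟩

theorem sum_splittings_fst (s : Finset α) (f : Finset α → M) :
    ∑ p ∈ s.splittings, f p.1 = ∑ t ∈ s.ssubsets.filter Finset.Nonempty, f t := by
  refine sum_nbij' Prod.fst (fun t => (t, s \ t)) ?_ ?_ ?_ ?_ (fun _ _ => rfl) <;>
    simp +contextual [mem_splittings]

theorem sum_powerset_filter_nonempty (s : Finset α) (hs : s.Nonempty) (f : Finset α → M) :
    ∑ t ∈ s.powerset.filter Finset.Nonempty, f t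
      = f s + ∑ t ∈ s.ssubsets.filter Finset.Nonempty, f t := by
  rw [ssubsets, filter_erase, add_sum_erase]
  simpa using hs

end Finset

theorem sem_coal_const_one {P D : Type} [DecidableEq P] [AddCommMonoid D]
    {ot : D → D → D} {one : D} {val : Multiset D → D} (hot : ∀ d, ot d one = d)
    (ζ : WPCL P D) (γ : Finset (Finset P)) :
    sem ot one val (ζ.coal (.const one)) γ = ∑ p ∈ γ.splittings, sem ot one val ζ p.1 := by
  simp only [sem, hot]
  rfl

theorem stmt7 {P D : Type} [DecidableEq P] [AddCommMonoid D]
    (ot : D → D → D) (one : D) (val : Multiset D → D)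
    (hpvm : IsPVM D ot one val) (ζ : WPCL P D) (γ : Finset (Finset P)) (hγ : Config γ) :
    sem ot one val (wclosure one ζ) γ
      = ∑ γ' ∈ γ.powerset.filter Finset.Nonempty, sem ot one val ζ γ' := by
  rw [Finset.sum_powerset_filter_nonempty γ hγ.1, ← Finset.sum_splittings_fst,
    ← sem_coal_const_one hpvm.ot_one]
  rfl
end

section
/- If the pv-monoid D is associative (⊗ is associative) and ⊕-distributive, then coalescing of w_pvm-PCL formulas is associative: (ζ₁ ⊎ ζ₂) ⊎ ζ₃ ≡ ζ₁ ⊎ (ζ₂ ⊎ ζ₃). -/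
/-
Both sides of the identity expand, by distributivity, into a sum over ordered splittings
`γ = A ⊍ B ⊍ C` into three nonempty blocks of the product `‖ζ₁‖(A) ⊗ ‖ζ₂‖(B) ⊗ ‖ζ₃‖(C)`,
bracketed differently; associativity of `⊗` identifies the summands.
-/

open Finset

section Splits

variable {β : Type*} [DecidableEq β]

def splits (γ : Finset β) : Finset (Finset β × Finset β) :=
  (γ.powerset ×ˢ γ.powerset).filter
    fun p => p.1.Nonempty ∧ p.2.Nonempty ∧ Disjoint p.1 p.2 ∧ p.1 ∪ p.2 = γ

theorem mem_splits {γ : Finset β} {p : Finset β × Finset β} :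
    p ∈ splits γ ↔ p.1.Nonempty ∧ p.2.Nonempty ∧ Disjoint p.1 p.2 ∧ p.1 ∪ p.2 = γ := by
  simp only [splits, mem_filter, mem_product, mem_powerset, and_iff_right_iff_imp]
  rintro ⟨-, -, -, rfl⟩
  exact ⟨subset_union_left, subset_union_right⟩

theorem sum_splits_splits_fst {M : Type*} [AddCommMonoid M] (γ : Finset β)
    (F : Finset β → Finset β → Finset β → M) :
    ∑ p ∈ splits γ, ∑ q ∈ splits p.1, F q.1 q.2 p.2
      = ∑ p ∈ splits γ, ∑ q ∈ splits p.2, F p.1 q.1 q.2 := by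
  rw [sum_sigma', sum_sigma']
  refine sum_nbij' (fun x => ⟨(x.2.1, x.2.2 ∪ x.1.2), (x.2.2, x.1.2)⟩)
    (fun x => ⟨(x.1.1 ∪ x.2.1, x.2.2), (x.1.1, x.2.1)⟩) ?_ ?_ ?_ ?_ (fun _ _ => rfl)
  · rintro ⟨⟨U, C⟩, A, B⟩ hx
    simp only [mem_sigma, mem_splits] at hx ⊢
    obtain ⟨⟨-, hC, hUC, rfl⟩, hA, hB, hAB, rfl⟩ := hx
    rw [disjoint_union_left] at hUC
    exact ⟨⟨hA, hB.mono subset_union_left, disjoint_union_right.2 ⟨hAB, hUC.1⟩,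
      (union_assoc _ _ _).symm⟩, hB, hC, hUC.2, trivial⟩
  · rintro ⟨⟨A, V⟩, B, C⟩ hx
    simp only [mem_sigma, mem_splits] at hx ⊢
    obtain ⟨⟨hA, -, hAV, rfl⟩, hB, hC, hBC, rfl⟩ := hx
    rw [disjoint_union_right] at hAV
    exact ⟨⟨hA.mono subset_union_left, hC, disjoint_union_left.2 ⟨hAV.2, hBC⟩,
      union_assoc _ _ _⟩, hA, hB, hAV.1, trivial⟩
  · rintro ⟨⟨U, C⟩, A, B⟩ hx
    obtain ⟨-, -, -, hunion⟩ := mem_splits.1 (mem_sigma.1 hx).2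
    simp only [hunion]
  · rintro ⟨⟨A, V⟩, B, C⟩ hx
    obtain ⟨-, -, -, hunion⟩ := mem_splits.1 (mem_sigma.1 hx).2
    simp only [hunion]

end Splits

section Distributive

variable {D : Type*} [AddCommMonoid D] {ι : Type*}

theorem sum_ot (ot : D → D → D) (zero_ot : ∀ d, ot 0 d = 0)
    (hrd : ∀ a b c : D, ot (a + b) c = ot a c + ot b c) (s : Finset ι) (f : ι → D) (c : D) :
    ot (∑ i ∈ s, f i) c = ∑ i ∈ s, ot (f i) c :=
  map_sum (⟨⟨(ot · c), zero_ot c⟩, fun a b => hrd a b c⟩ : D →+ D) f s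

theorem ot_sum (ot : D → D → D) (ot_zero : ∀ d, ot d 0 = 0)
    (hld : ∀ a b c : D, ot a (b + c) = ot a b + ot a c) (s : Finset ι) (f : ι → D) (c : D) :
    ot c (∑ i ∈ s, f i) = ∑ i ∈ s, ot c (f i) :=
  map_sum (⟨⟨ot c, ot_zero c⟩, hld c⟩ : D →+ D) f s

end Distributive

theorem sem_coal {P D : Type} [DecidableEq P] [AddCommMonoid D]
    (ot : D → D → D) (one : D) (val : Multiset D → D) (ζ₁ ζ₂ : WPCL P D)
    (γ : Finset (Finset P)) :
    sem ot one val (ζ₁.coal ζ₂) γ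
      = ∑ p ∈ splits γ, ot (sem ot one val ζ₁ p.1) (sem ot one val ζ₂ p.2) := by
  rw [sem, splits]

theorem sum_splits_ot_assoc {β D : Type*} [DecidableEq β] [AddCommMonoid D]
    (ot : D → D → D) (zero_ot : ∀ d, ot 0 d = 0) (ot_zero : ∀ d, ot d 0 = 0)
    (hassoc : ∀ a b c : D, ot (ot a b) c = ot a (ot b c))
    (hld : ∀ a b c : D, ot a (b + c) = ot a b + ot a c)
    (hrd : ∀ a b c : D, ot (a + b) c = ot a c + ot b c)
    (f g h : Finset β → D) (γ : Finset β) :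
    ∑ p ∈ splits γ, ot (∑ q ∈ splits p.1, ot (f q.1) (g q.2)) (h p.2)
      = ∑ p ∈ splits γ, ot (f p.1) (∑ q ∈ splits p.2, ot (g q.1) (h q.2)) := by
  simp only [sum_ot ot zero_ot hrd, ot_sum ot ot_zero hld, hassoc]
  exact sum_splits_splits_fst γ fun A B C => ot (f A) (ot (g B) (h C))

theorem stmt10_general {P D : Type} [DecidableEq P] [AddCommMonoid D]
    (ot : D → D → D) (one : D) (val : Multiset D → D)
    (hpvm : IsPVM D ot one val)
    (hassoc : ∀ a b c : D, ot (ot a b) c = ot a (ot b c))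
    (hld : ∀ a b c : D, ot a (b + c) = ot a b + ot a c)
    (hrd : ∀ a b c : D, ot (a + b) c = ot a c + ot b c)
    (ζ₁ ζ₂ ζ₃ : WPCL P D) (γ : Finset (Finset P)) :
    sem ot one val ((ζ₁.coal ζ₂).coal ζ₃) γ
      = sem ot one val (ζ₁.coal (ζ₂.coal ζ₃)) γ := by
  simp only [sem_coal]
  exact sum_splits_ot_assoc ot hpvm.zero_ot hpvm.ot_zero hassoc hld hrd _ _ _ γ

theorem stmt10 {P D : Type} [DecidableEq P] [AddCommMonoid D]
    (ot : D → D → D) (one : D) (val : Multiset D → D)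
    (hpvm : IsPVM D ot one val)
    (hassoc : ∀ a b c : D, ot (ot a b) c = ot a (ot b c))
    (hld : ∀ a b c : D, ot a (b + c) = ot a b + ot a c)
    (hrd : ∀ a b c : D, ot (a + b) c = ot a c + ot b c)
    (ζ₁ ζ₂ ζ₃ : WPCL P D) (γ : Finset (Finset P)) (hγ : Config γ) :
    sem ot one val ((ζ₁.coal ζ₂).coal ζ₃) γ
      = sem ot one val (ζ₁.coal (ζ₂.coal ζ₃)) γ :=
  stmt10_general ot one val hpvm hassoc hld hrd ζ₁ ζ₂ ζ₃ γ
end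

section
/- If the pv-monoid D is left-⊕-distributive, then coalescing distributes over ⊕ on the right: for w_pvm-PCL formulas ζ, ζ₁, ζ₂, ζ ⊎ (ζ₁ ⊕ ζ₂) ≡ (ζ ⊎ ζ₁) ⊕ (ζ ⊎ ζ₂). -/
theorem stmt12_general {P D : Type} [DecidableEq P] [AddCommMonoid D]
    (ot : D → D → D) (one : D) (val : Multiset D → D)
    (hld : ∀ a b c : D, ot a (b + c) = ot a b + ot a c)
    (ζ ζ₁ ζ₂ : WPCL P D) (γ : Finset (Finset P)) :
    sem ot one val (ζ.coal (ζ₁.oplus ζ₂)) γ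
      = sem ot one val ((ζ.coal ζ₁).oplus (ζ.coal ζ₂)) γ :=
  (Finset.sum_congr rfl fun _ _ => hld _ _ _).trans Finset.sum_add_distrib

theorem stmt12 {P D : Type} [DecidableEq P] [AddCommMonoid D]
    (ot : D → D → D) (one : D) (val : Multiset D → D)
    (hpvm : IsPVM D ot one val)
    (hld : ∀ a b c : D, ot a (b + c) = ot a b + ot a c)
    (ζ ζ₁ ζ₂ : WPCL P D) (γ : Finset (Finset P)) (hγ : Config γ) :
    sem ot one val (ζ.coal (ζ₁.oplus ζ₂)) γ
      = sem ot one val ((ζ.coal ζ₁).oplus (ζ.coal ζ₂)) γ :=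
  stmt12_general ot one val hld ζ ζ₁ ζ₂ γ
end

section
/- If the pv-monoid D is right-⊕-distributive, then coalescing distributes over ⊕ on the left: (ζ₁ ⊕ ζ₂) ⊎ ζ ≡ (ζ₁ ⊎ ζ) ⊕ (ζ₂ ⊎ ζ) for all w_pvm-PCL formulas ζ, ζ₁, ζ₂. -/
theorem stmt13_general {P D : Type} [DecidableEq P] [AddCommMonoid D]
    (ot : D → D → D) (one : D) (val : Multiset D → D)
    (hrd : ∀ a b c : D, ot (a + b) c = ot a c + ot b c)
    (ζ ζ₁ ζ₂ : WPCL P D) (γ : Finset (Finset P)) :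
    sem ot one val ((ζ₁.oplus ζ₂).coal ζ) γ
      = sem ot one val ((ζ₁.coal ζ).oplus (ζ₂.coal ζ)) γ := by
  simp only [sem, hrd, Finset.sum_add_distrib]

theorem stmt13 {P D : Type} [DecidableEq P] [AddCommMonoid D]
    (ot : D → D → D) (one : D) (val : Multiset D → D)
    (hpvm : IsPVM D ot one val)
    (hrd : ∀ a b c : D, ot (a + b) c = ot a c + ot b c)
    (ζ ζ₁ ζ₂ : WPCL P D) (γ : Finset (Finset P)) (hγ : Config γ) :
    sem ot one val ((ζ₁.oplus ζ₂).coal ζ) γ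
      = sem ot one val ((ζ₁.coal ζ).oplus (ζ₂.coal ζ)) γ :=
  stmt13_general ot one val hrd ζ ζ₁ ζ₂ γ
end

section
/- Let φ be a PIL formula over P and ζ₁, ζ₂ w_pvm-PCL formulas over P and a left-⊕-distributive pv-monoid D. Then φ ⊗ (ζ₁ ⊎ ζ₂) ≡ (φ ⊗ ζ₁) ⊎ (φ ⊗ ζ₂). -/
/-! `‖φ‖` is the `0`/`1` indicator of `φ`, and `φ` holds on `γ` iff it holds on both parts of a
splitting of `γ`. Hence weighting each term of the coalescing sum by `‖φ‖` on its two parts is the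
same as weighting the whole sum by `‖φ‖(γ)`. -/

theorem PCLsat_pil_union {P : Type} [DecidableEq P] {φ : PIL P} {γ₁ γ₂ : Finset (Finset P)} :
    PCLsat (γ₁ ∪ γ₂) (.pil φ) ↔ PCLsat γ₁ (.pil φ) ∧ PCLsat γ₂ (.pil φ) := by
  simp only [PCLsat, Finset.mem_union, or_imp, forall_and]

section Otimes

variable {P D : Type} [AddCommMonoid D] {ot : D → D → D}

theorem ite_ot_ite (zero_ot : ∀ d, ot 0 d = 0) (ot_zero : ∀ d, ot d 0 = 0)
    (p q : Prop) [Decidable p] [Decidable q] (x y : D) :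
    ot (if p then x else 0) (if q then y else 0) = if p ∧ q then ot x y else 0 := by
  by_cases hp : p <;> by_cases hq : q <;> simp [hp, hq, zero_ot, ot_zero]

variable [DecidableEq P] {one : D} {val : Multiset D → D}

open scoped Classical in
theorem sem_pil_otimes (one_ot : ∀ d, ot one d = d) (zero_ot : ∀ d, ot 0 d = 0)
    (φ : PIL P) (ζ : WPCL P D) (γ : Finset (Finset P)) :
    sem ot one val ((WPCL.pcl (PCL.pil φ)).otimes ζ) γ
      = if PCLsat γ (.pil φ) then sem ot one val ζ γ else 0 := by
  simp only [sem]
  split_ifs <;> simp only [one_ot, zero_ot]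

end Otimes

theorem stmt14_general {P D : Type} [DecidableEq P] [AddCommMonoid D]
    (ot : D → D → D) (one : D) (val : Multiset D → D)
    (hpvm : IsPVM D ot one val)
    (φ : PIL P) (ζ₁ ζ₂ : WPCL P D) (γ : Finset (Finset P)) :
    sem ot one val ((WPCL.pcl (PCL.pil φ)).otimes (ζ₁.coal ζ₂)) γ
      = sem ot one val
          (((WPCL.pcl (PCL.pil φ)).otimes ζ₁).coal ((WPCL.pcl (PCL.pil φ)).otimes ζ₂)) γ := by
  simp only [sem.eq_5, sem_pil_otimes hpvm.one_ot hpvm.zero_ot, ite_ot_ite hpvm.zero_ot hpvm.ot_zero]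
  rw [Finset.ite_sum_zero, Finset.sum_congr rfl]
  intro p hp
  rw [← (Finset.mem_filter.1 hp).2.2.2.2]
  classical
  exact if_congr PCLsat_pil_union rfl rfl

theorem stmt14 {P D : Type} [DecidableEq P] [AddCommMonoid D]
    (ot : D → D → D) (one : D) (val : Multiset D → D)
    (hpvm : IsPVM D ot one val)
    (hld : ∀ a b c : D, ot a (b + c) = ot a b + ot a c)
    (φ : PIL P) (ζ₁ ζ₂ : WPCL P D) (γ : Finset (Finset P)) (hγ : Config γ) :
    sem ot one val ((WPCL.pcl (PCL.pil φ)).otimes (ζ₁.coal ζ₂)) γ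
      = sem ot one val
          (((WPCL.pcl (PCL.pil φ)).otimes ζ₁).coal ((WPCL.pcl (PCL.pil φ)).otimes ζ₂)) γ :=
  stmt14_general ot one val hpvm φ ζ₁ ζ₂ γ
end

section
/- Let D be an idempotent pv-monoid whose valuation function val is symmetric and ⊕-preservative. Then for every w_pvm-PCL formula ζ: ∼(∗ζ) ≡ ∗(∼ζ), i.e., ⊕_{γ'⊆γ} ‖∗ζ‖(γ') = ‖∗(∼ζ)‖(γ) for every configuration γ. -/
/-! Since `⊕` is idempotent, a sum only depends on the set of its summands. The left-hand
side sums `val (‖ζ‖(x'₁), …, ‖ζ‖(x'ₙ))` over the partitions `{x'₁, …, x'ₙ}` of the nonempty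
subsets `δ ⊆ γ`. On the right, `‖∼ζ‖(x)` is the sum of `‖ζ‖(x')` over the nonempty `x' ⊆ x`,
so distributing `val` over these sums gives the sum of the same values over the partitions
`{x₁, …, xₙ}` of `γ` together with a choice of nonempty `x'ᵢ ⊆ xᵢ`. The chosen `x'ᵢ` partition
the nonempty `⋃ x'ᵢ ⊆ γ`, and every partition of a nonempty `δ ⊆ γ` arises in this way by
adding `γ \ δ` to one of its blocks. -/

namespace Multiset

theorem nodup_of_nodup_bind {α β : Type*} {s : Multiset α} {t : α → Multiset β}
    (h : (s.bind t).Nodup) (ht : ∀ a ∈ s, t a ≠ 0) : s.Nodup := by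
  induction s using Multiset.induction with
  | empty => exact nodup_zero
  | cons a s ih =>
    rw [cons_bind, nodup_add] at h
    refine nodup_cons.2 ⟨fun ha => ht a (mem_cons_self a s) ?_,
      ih h.2.1 fun b hb => ht b (mem_cons_of_mem hb)⟩
    exact disjoint_self.1 (h.2.2.mono_right (le_bind s ha))

end Multiset

namespace Finset

variable {α : Type*}

theorem bind_val_le_of_rel {M s : Multiset (Finset α)} (h : M.Rel (fun x a => a ⊆ x) s) :
    s.bind val ≤ M.bind val := by
  induction h with
  | zero => simp
  | cons hxa _ ih => simpa using add_le_add (val_le_iff.2 hxa) ih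

variable [DecidableEq α]

theorem val_union_of_disjoint {s t : Finset α} (h : Disjoint s t) :
    (s ∪ t).val = s.val + t.val := by
  rw [← disjUnion_eq_union s t h]
  rfl

theorem bind_val_eq_val_iff {Q : Finset (Finset α)} {δ : Finset α} :
    Q.val.bind val = δ.val ↔ (∀ x ∈ Q, ∀ y ∈ Q, x ≠ y → Disjoint x y) ∧ Q.sup id = δ := by
  constructor
  · intro h
    have hnd : (Q.val.bind val).Nodup := h ▸ δ.nodup
    refine ⟨fun x hx y hy hxy => disjoint_val.1 ((Multiset.nodup_bind.1 hnd).2.forall hx hy hxy),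
      ?_⟩
    ext a
    simp [sup_eq_biUnion, ← mem_val, ← h, Multiset.mem_bind]
  · rintro ⟨hd, rfl⟩
    rw [sup_eq_biUnion, ← disjiUnion_eq_biUnion Q id fun x hx y hy hxy => hd x hx y hy hxy]
    rfl

end Finset

open Finset

section Partitions

variable {α : Type*} [DecidableEq α]

def partitions (δ : Finset α) : Finset (Finset (Finset α)) :=
  δ.powerset.powerset.filter
    (fun Q => Q.Nonempty ∧ (∀ x ∈ Q, x.Nonempty) ∧
      (∀ x ∈ Q, ∀ y ∈ Q, x ≠ y → Disjoint x y) ∧ Q.sup id = δ)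

theorem mem_partitions {δ : Finset α} {Q : Finset (Finset α)} :
    Q ∈ partitions δ ↔ Q.Nonempty ∧ (∀ x ∈ Q, x.Nonempty) ∧ Q.val.bind val = δ.val := by
  rw [partitions, mem_filter, mem_powerset, bind_val_eq_val_iff, and_iff_right_iff_imp]
  rintro ⟨-, -, -, rfl⟩ x hx
  exact mem_powerset.2 (le_sup (f := id) hx)

theorem exists_mem_partitions_val_eq {δ : Finset α} {m : Multiset (Finset α)} (hm : m ≠ 0)
    (hne : ∀ x ∈ m, x.Nonempty) (hbind : m.bind val = δ.val) :
    ∃ Q ∈ partitions δ, Q.val = m := by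
  have hnd : m.Nodup := Multiset.nodup_of_nodup_bind (hbind ▸ δ.nodup) fun x hx =>
    val_eq_zero.not.2 (hne x hx).ne_empty
  exact ⟨⟨m, hnd⟩, mem_partitions.2 ⟨Multiset.exists_mem_of_ne_zero hm, hne, hbind⟩, rfl⟩

theorem exists_mem_partitions_of_mem_sections {γ : Finset α} {Q : Finset (Finset α)}
    (hQ : Q ∈ partitions γ) {s : Multiset (Finset α)}
    (hs : s ∈ Multiset.Sections (Q.val.map fun x => (x.powerset.filter Finset.Nonempty).val)) :
    ∃ δ ∈ γ.powerset.filter Finset.Nonempty, ∃ Q' ∈ partitions δ, Q'.val = s := by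
  obtain ⟨⟨x, hx⟩, -, hQγ⟩ := mem_partitions.1 hQ
  have hrel : Q.val.Rel (fun x a => a ⊆ x ∧ a.Nonempty) s := by
    simpa [Multiset.rel_map_left] using Multiset.mem_sections.1 hs
  have hle : s.bind val ≤ γ.val := hQγ ▸ bind_val_le_of_rel (hrel.mono fun _ _ _ _ h => h.1)
  have hne : ∀ a ∈ s, a.Nonempty := fun a ha => by
    obtain ⟨-, -, -, ha'⟩ := Multiset.exists_mem_of_rel_of_mem (Multiset.rel_flip.2 hrel) ha
    exact ha'
  obtain ⟨a, ha, -⟩ := Multiset.exists_mem_of_rel_of_mem hrel hx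
  obtain ⟨p, hp⟩ := hne a ha
  let δ : Finset α := ⟨s.bind val, Multiset.nodup_of_le hle γ.nodup⟩
  obtain ⟨Q', hQ', rfl⟩ := exists_mem_partitions_val_eq (δ := δ)
    (fun h => Multiset.notMem_zero a (h ▸ ha)) hne rfl
  exact ⟨δ, mem_filter.2 ⟨mem_powerset.2 (val_le_iff.1 hle), p, Multiset.mem_bind.2 ⟨a, ha, hp⟩⟩,
    Q', hQ', rfl⟩

theorem exists_mem_sections_of_mem_partitions {γ δ : Finset α} (hδ : δ ⊆ γ)
    {Q' : Finset (Finset α)} (hQ' : Q' ∈ partitions δ) :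
    ∃ Q ∈ partitions γ,
      Q'.val ∈ Multiset.Sections (Q.val.map fun x => (x.powerset.filter Finset.Nonempty).val) := by
  obtain ⟨⟨x₀, hx₀⟩, hne, hQ'δ⟩ := mem_partitions.1 hQ'
  have hx₀δ : x₀ ⊆ δ := val_le_iff.1 (hQ'δ ▸ Multiset.le_bind _ hx₀)
  have hsplit : Q'.val = x₀ ::ₘ Q'.val.erase x₀ := (Multiset.cons_erase hx₀).symm
  have hbind : ((x₀ ∪ (γ \ δ)) ::ₘ Q'.val.erase x₀).bind val = γ.val :=
    calc _ = (γ \ δ).val + (x₀ ::ₘ Q'.val.erase x₀).bind val := by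
          rw [Multiset.cons_bind, Multiset.cons_bind,
            val_union_of_disjoint (disjoint_of_subset_left hx₀δ disjoint_sdiff)]
          abel
      _ = (γ \ δ).val + δ.val := by rw [← hsplit, hQ'δ]
      _ = γ.val := by rw [← val_union_of_disjoint sdiff_disjoint, sdiff_union_of_subset hδ]
  have hne' : ∀ x ∈ (x₀ ∪ (γ \ δ)) ::ₘ Q'.val.erase x₀, x.Nonempty := by
    intro x hx
    rcases Multiset.mem_cons.1 hx with rfl | hx
    · exact (hne x₀ hx₀).mono subset_union_left
    · exact hne x (Multiset.mem_of_mem_erase hx)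
  obtain ⟨Q, hQ, hQval⟩ := exists_mem_partitions_val_eq Multiset.cons_ne_zero hne' hbind
  refine ⟨Q, hQ, Multiset.mem_sections.2 ?_⟩
  rw [hQval, Multiset.rel_map_left]
  nth_rw 2 [hsplit]
  refine Multiset.Rel.cons ?_ (Multiset.rel_refl_of_refl_on fun y hy => ?_)
  · exact mem_filter.2 ⟨mem_powerset.2 subset_union_left, hne x₀ hx₀⟩
  · exact mem_filter.2 ⟨mem_powerset.2 subset_rfl, hne y (Multiset.mem_of_mem_erase hy)⟩

theorem exists_mem_partitions_mem_sections_iff {γ : Finset α} {s : Multiset (Finset α)} :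
    (∃ Q ∈ partitions γ,
        s ∈ Multiset.Sections (Q.val.map fun x => (x.powerset.filter Finset.Nonempty).val)) ↔
      ∃ δ ∈ γ.powerset.filter Finset.Nonempty, ∃ Q' ∈ partitions δ, Q'.val = s := by
  constructor
  · rintro ⟨Q, hQ, hs⟩
    exact exists_mem_partitions_of_mem_sections hQ hs
  · rintro ⟨δ, hδ, Q', hQ', rfl⟩
    exact exists_mem_sections_of_mem_partitions (mem_powerset.1 (mem_filter.1 hδ).1) hQ'

end Partitions

theorem sum_map_eq_sum_map_of_mem_iff {D ι : Type*} [AddCommMonoid D]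
    (idem : ∀ d : D, d + d = d) {s t : Multiset ι} (h : ∀ a, a ∈ s ↔ a ∈ t) (F : ι → D) :
    (s.map F).sum = (t.map F).sum := by
  classical
  have : Std.Associative (α := D) (· + ·) := ⟨add_assoc⟩
  have : Std.Commutative (α := D) (· + ·) := ⟨add_comm⟩
  have : Std.IdempotentOp (α := D) (· + ·) := ⟨idem⟩
  have hdedup : ∀ u : Multiset D, u.sum = u.dedup.fold (· + ·) 0 := fun u =>
    (Multiset.fold_dedup_idem _ u 0).symm
  have hsupp : (s.map F).dedup = (t.map F).dedup := Multiset.dedup_ext.2 fun a => by simp [h]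
  rw [hdedup, hdedup (t.map F), hsupp]

section Valuation

variable {D : Type*} [AddCommMonoid D] {val : Multiset D → D}

theorem val_sum_cons (hzero : ∀ m : Multiset D, (0 : D) ∈ m → val m = 0)
    (hadd : ∀ (d₁ d₂ : D) (m : Multiset D),
      val ((d₁ + d₂) ::ₘ m) = val (d₁ ::ₘ m) + val (d₂ ::ₘ m))
    (m t : Multiset D) :
    val (m.sum ::ₘ t) = (m.map fun d => val (d ::ₘ t)).sum := by
  induction m using Multiset.induction with
  | empty => simpa using hzero _ (Multiset.mem_cons_self 0 t)
  | cons a m ih => rw [Multiset.sum_cons, hadd, ih, Multiset.map_cons, Multiset.sum_cons]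

theorem val_map_sum_add (hzero : ∀ m : Multiset D, (0 : D) ∈ m → val m = 0)
    (hadd : ∀ (d₁ d₂ : D) (m : Multiset D),
      val ((d₁ + d₂) ::ₘ m) = val (d₁ ::ₘ m) + val (d₂ ::ₘ m))
    {α : Type*} (f : α → D) (M : Multiset (Multiset α)) (t : Multiset D) :
    val (M.map (fun m => (m.map f).sum) + t)
      = ((Multiset.Sections M).map fun s => val (s.map f + t)).sum := by
  induction M using Multiset.induction generalizing t with
  | empty => simp
  | cons m M ih =>
    rw [Multiset.map_cons, Multiset.cons_add, val_sum_cons hzero hadd, Multiset.sections_cons,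
      Multiset.map_bind, Multiset.sum_bind, Multiset.map_map]
    congr 1
    refine Multiset.map_congr rfl fun a _ => ?_
    simp [← Multiset.add_cons, ih, Multiset.map_map]

end Valuation

theorem filter_split_eq_image {α : Type*} [DecidableEq α] (δ : Finset α) :
    (δ.powerset ×ˢ δ.powerset).filter
        (fun p => p.1.Nonempty ∧ p.2.Nonempty ∧ Disjoint p.1 p.2 ∧ p.1 ∪ p.2 = δ) =
      ((δ.powerset.filter Finset.Nonempty).erase δ).image fun δ' => (δ', δ \ δ') := by
  ext ⟨a, b⟩
  simp only [mem_filter, mem_product, mem_powerset, mem_image, mem_erase, Prod.mk.injEq]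
  constructor
  · rintro ⟨⟨ha, -⟩, hane, hbne, hab, rfl⟩
    refine ⟨a, ⟨fun h => hbne.ne_empty ?_, subset_union_left, hane⟩, rfl,
      union_sdiff_cancel_left hab⟩
    exact (disjoint_self_iff_empty _).1 (hab.mono_left (h ▸ subset_union_right))
  · rintro ⟨a, ⟨hne, hsub, hane⟩, rfl, rfl⟩
    exact ⟨⟨hsub, sdiff_subset⟩, hane, sdiff_nonempty.2 fun h => hne (Subset.antisymm hsub h),
      disjoint_sdiff, union_sdiff_of_subset hsub⟩

section Semantics

variable {P D : Type} [DecidableEq P] [AddCommMonoid D]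
  {ot : D → D → D} {one : D} {val : Multiset D → D}

theorem sem_star (ζ : WPCL P D) (δ : Finset (Finset P)) :
    sem ot one val (.star ζ) δ = ∑ Q ∈ partitions δ, val (Q.val.map (sem ot one val ζ)) := by
  simp [sem, partitions]

theorem sem_wclosure (hot : ∀ d, ot d one = d) (ζ : WPCL P D) {δ : Finset (Finset P)}
    (hδ : δ.Nonempty) :
    sem ot one val (wclosure one ζ) δ
      = ∑ δ' ∈ δ.powerset.filter Finset.Nonempty, sem ot one val ζ δ' := by
  have hδmem : δ ∈ δ.powerset.filter Finset.Nonempty := mem_filter.2 ⟨mem_powerset_self δ, hδ⟩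
  rw [← add_sum_erase _ _ hδmem, wclosure, sem, sem, filter_split_eq_image,
    sum_image fun _ _ _ _ h => (Prod.ext_iff.1 h).1]
  simp [sem, hot]

theorem sem_star_wclosure (hpvm : IsPVM D ot one val)
    (hpres : ∀ (d₁ d₂ : D) (m : Multiset D),
      val ((d₁ + d₂) ::ₘ m) = val (d₁ ::ₘ m) + val (d₂ ::ₘ m))
    (ζ : WPCL P D) (γ : Finset (Finset P)) :
    sem ot one val (.star (wclosure one ζ)) γ = ∑ Q ∈ partitions γ,
      ((Multiset.Sections (Q.val.map fun x => (x.powerset.filter Finset.Nonempty).val)).map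
        fun s => val (s.map (sem ot one val ζ))).sum := by
  rw [sem_star]
  refine sum_congr rfl fun Q hQ => ?_
  rw [Multiset.map_congr rfl fun x hx =>
    sem_wclosure hpvm.ot_one ζ ((mem_partitions.1 hQ).2.1 x hx)]
  simpa [Multiset.map_map, Function.comp_def, sum_eq_multiset_sum] using
    val_map_sum_add hpvm.val_zero hpres (sem ot one val ζ)
      (Q.val.map fun x => (x.powerset.filter Finset.Nonempty).val) 0

end Semantics

theorem stmt16 {P D : Type} [DecidableEq P] [AddCommMonoid D]
    (ot : D → D → D) (one : D) (val : Multiset D → D)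
    (hpvm : IsPVM D ot one val)
    (hpres : ∀ (d₁ d₂ : D) (m : Multiset D),
      val ((d₁ + d₂) ::ₘ m) = val (d₁ ::ₘ m) + val (d₂ ::ₘ m))
    (ζ : WPCL P D) (γ : Finset (Finset P)) (hγ : Config γ) :
    sem ot one val (wclosure one (WPCL.star ζ)) γ
      = sem ot one val (WPCL.star (wclosure one ζ)) γ := by
  have hsupp : ∀ s, s ∈ (γ.powerset.filter Finset.Nonempty).val.bind
        (fun δ => (partitions δ).val.map Finset.val) ↔
      s ∈ (partitions γ).val.bind fun Q =>
        Multiset.Sections (Q.val.map fun x => (x.powerset.filter Finset.Nonempty).val) := by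
    intro s
    simp only [Multiset.mem_bind, Multiset.mem_map, Finset.mem_val]
    exact exists_mem_partitions_mem_sections_iff.symm
  rw [sem_wclosure hpvm.ot_one _ hγ.1, sem_star_wclosure hpvm hpres]
  simpa only [sem_star, Multiset.map_bind, Multiset.sum_bind, Multiset.map_map,
    Function.comp_def, sum_eq_multiset_sum] using
    sum_map_eq_sum_map_of_mem_iff hpvm.idem hsupp fun s => val (s.map (sem ot one val ζ))
end

section
/- Let d₁, d₂ ∈ D and ζ₁, ζ₂ be w_pvm-PCL formulas over a left-⊕-distributive pv-monoid D with ⊗ commutative and associative. Then (d₁ ⊗ ζ₁) ⊎ (d₂ ⊗ ζ₂) ≡ d₁ ⊗ d₂ ⊗ (ζ₁ ⊎ ζ₂). -/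
section OtAlgebra

variable {D : Type} (ot : D → D → D)

theorem ot_ot_ot_comm (hcomm : ∀ a b : D, ot a b = ot b a)
    (hassoc : ∀ a b c : D, ot (ot a b) c = ot a (ot b c)) (a b c e : D) :
    ot (ot a b) (ot c e) = ot a (ot c (ot b e)) := by
  rw [hassoc, hcomm b, hassoc, hcomm e]

theorem ot_finset_sum [AddCommMonoid D] {ι : Type} (hzero : ∀ d, ot d 0 = 0)
    (hld : ∀ a b c : D, ot a (b + c) = ot a b + ot a c) (d : D) (s : Finset ι) (f : ι → D) :
    ot d (∑ i ∈ s, f i) = ∑ i ∈ s, ot d (f i) :=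
  map_sum ({ toFun := ot d, map_zero' := hzero d, map_add' := hld d } : D →+ D) f s

end OtAlgebra

theorem stmt17_general {P D : Type} [DecidableEq P] [AddCommMonoid D]
    (ot : D → D → D) (one : D) (val : Multiset D → D)
    (hpvm : IsPVM D ot one val)
    (hld : ∀ a b c : D, ot a (b + c) = ot a b + ot a c)
    (hcomm : ∀ a b : D, ot a b = ot b a)
    (hassoc : ∀ a b c : D, ot (ot a b) c = ot a (ot b c))
    (d₁ d₂ : D) (ζ₁ ζ₂ : WPCL P D) (γ : Finset (Finset P)) :
    sem ot one val (((WPCL.const d₁).otimes ζ₁).coal ((WPCL.const d₂).otimes ζ₂)) γ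
      = sem ot one val ((WPCL.const d₁).otimes ((WPCL.const d₂).otimes (ζ₁.coal ζ₂))) γ := by
  simp only [sem, ot_finset_sum ot hpvm.ot_zero hld]
  exact Finset.sum_congr rfl fun p _ => ot_ot_ot_comm ot hcomm hassoc _ _ _ _

theorem stmt17 {P D : Type} [DecidableEq P] [AddCommMonoid D]
    (ot : D → D → D) (one : D) (val : Multiset D → D)
    (hpvm : IsPVM D ot one val)
    (hld : ∀ a b c : D, ot a (b + c) = ot a b + ot a c)
    (hcomm : ∀ a b : D, ot a b = ot b a)
    (hassoc : ∀ a b c : D, ot (ot a b) c = ot a (ot b c))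
    (d₁ d₂ : D) (ζ₁ ζ₂ : WPCL P D) (γ : Finset (Finset P)) (hγ : Config γ) :
    sem ot one val (((WPCL.const d₁).otimes ζ₁).coal ((WPCL.const d₂).otimes ζ₂)) γ
      = sem ot one val ((WPCL.const d₁).otimes ((WPCL.const d₂).otimes (ζ₁.coal ζ₂))) γ :=
  stmt17_general ot one val hpvm hld hcomm hassoc d₁ d₂ ζ₁ ζ₂ γ
end

section
/- Let (mᵢ)_{i∈I} and (m'ⱼ)_{j∈J} be finite families of full monomials over P, and let γ̄, γ̄' be the unique configurations satisfying ∑_{i∈I} mᵢ and ∑_{j∈J} m'ⱼ respectively. If the interactions of the two families are disjoint (γ̄ ∩ γ̄' = ∅), then (∑_{i∈I} mᵢ) ⊎ (∑_{j∈J} m'ⱼ) ≡ ∑_{i∈I} mᵢ + ∑_{j∈J} m'ⱼ; if the unique satisfying configurations intersect (γ̄ ∩ γ̄' ≠ ∅), then (∑_{i∈I} mᵢ) ⊎ (∑_{j∈J} m'ⱼ) ≡ 0. -/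
lemma foldr_conj_sat {P : Type} (b : Finset P) (L : List (PIL P)) :
    PILsat b (L.foldr PIL.conj PIL.tt) ↔ ∀ φ ∈ L, PILsat b φ := by
  induction L with
  | nil => simp [PILsat]
  | cons h t ih =>
      simp only [List.foldr_cons, PIL.conj, PILsat, List.mem_cons]
      push_neg
      rw [ih]
      constructor
      · rintro ⟨hh, ht⟩ φ (rfl | hφ)
        exacts [hh, ht φ hφ]
      · intro H
        exact ⟨H h (Or.inl rfl), fun φ hφ => H φ (Or.inr hφ)⟩

lemma charMonomial_sat {P : Type} [Fintype P] [DecidableEq P] (a b : Finset P) :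
    PILsat b (charMonomial a) ↔ b = a := by
  rw [charMonomial, foldr_conj_sat]
  constructor
  · intro h
    ext p
    have := h _ (List.mem_map_of_mem (by simp [Finset.mem_toList] : p ∈ Finset.univ.toList))
    by_cases hp : p ∈ a <;> simp [hp, PILsat] at this <;> simp [hp, this]
  · rintro rfl φ hφ
    simp only [List.mem_map] at hφ
    obtain ⟨p, -, rfl⟩ := hφ
    by_cases hp : p ∈ b <;> simp [hp, PILsat]

lemma pil_char_sat {P : Type} [Fintype P] [DecidableEq P] (a : Finset P)
    (γ : Finset (Finset P)) (hγ : γ.Nonempty) :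
    PCLsat γ (PCL.pil (charMonomial a)) ↔ γ = {a} := by
  constructor
  · intro h
    have hsub : γ ⊆ {a} := fun y hy => by
      simpa using (charMonomial_sat a y).1 (h y hy)
    obtain ⟨x, hx⟩ := hγ
    have hxa : x = a := by simpa using hsub hx
    subst hxa
    exact Finset.Subset.antisymm hsub (Finset.singleton_subset_iff.2 hx)
  · rintro rfl y hy
    exact (charMonomial_sat a y).2 (by simpa using hy)

lemma pclSum_sat {P : Type} [Fintype P] [DecidableEq P]
    (l : List (Finset P)) (hl : l ≠ []) : ∀ γ : Finset (Finset P),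
    (PCLsat γ (pclSum l) ∧ γ.Nonempty) ↔ γ = l.toFinset := by
  induction l with
  | nil => exact absurd rfl hl
  | cons a rest ih =>
    intro γ
    cases rest with
    | nil =>
      simp only [pclSum, List.toFinset_cons, List.toFinset_nil, insert_empty_eq]
      constructor
      · rintro ⟨h, hne⟩; exact (pil_char_sat a γ hne).1 h
      · rintro rfl; exact ⟨(pil_char_sat a {a} ⟨a, by simp⟩).2 rfl, ⟨a, by simp⟩⟩
    | cons b rest' =>
      have IH := ih (by simp)
      show (PCLsat γ (PCL.coal (PCL.pil (charMonomial a)) (pclSum (b :: rest'))) ∧ γ.Nonempty)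
        ↔ γ = (a :: b :: rest').toFinset
      constructor
      · rintro ⟨⟨γ₁, γ₂, hγ₁, hγ₂, huni, hs₁, hs₂⟩, -⟩
        have hγ₁eq : γ₁ = {a} := (pil_char_sat a γ₁ hγ₁).1 hs₁
        have hγ₂eq : γ₂ = (b :: rest').toFinset := (IH γ₂).1 ⟨hs₂, hγ₂⟩
        subst hγ₁eq hγ₂eq
        simp [← huni]; exact Finset.insert_comm b a _
      · rintro rfl
        refine ⟨⟨{a}, (b :: rest').toFinset, ⟨a, by simp⟩, ⟨b, by simp⟩, ?_,
          (pil_char_sat a {a} ⟨a, by simp⟩).2 rfl, ((IH _).2 rfl).1⟩, ⟨a, by simp⟩⟩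
        simp; exact Finset.insert_comm b a _

lemma toFinset_nonempty {P : Type} [DecidableEq P] {l : List (Finset P)} (hl : l ≠ []) :
    l.toFinset.Nonempty := by
  cases l with
  | nil => exact absurd rfl hl
  | cons a t => exact ⟨a, by simp⟩

theorem stmt18 {P D : Type} [Fintype P] [DecidableEq P] [Nonempty P] [AddCommMonoid D]
    (ot : D → D → D) (one : D) (val : Multiset D → D)
    (hpvm : IsPVM D ot one val)
    (l₁ l₂ : List (Finset P)) (hl₁ : l₁ ≠ []) (hl₂ : l₂ ≠ [])
    (h₁ : ∀ a ∈ l₁, a.Nonempty) (h₂ : ∀ a ∈ l₂, a.Nonempty) :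
    (Disjoint l₁.toFinset l₂.toFinset →
      ∀ γ : Finset (Finset P), Config γ →
        sem ot one val ((WPCL.pcl (pclSum l₁)).coal (WPCL.pcl (pclSum l₂))) γ
          = sem ot one val (WPCL.pcl ((pclSum l₁).coal (pclSum l₂))) γ) ∧
    (¬ Disjoint l₁.toFinset l₂.toFinset →
      ∀ γ : Finset (Finset P), Config γ →
        sem ot one val ((WPCL.pcl (pclSum l₁)).coal (WPCL.pcl (pclSum l₂))) γ = 0) := by

  set A := l₁.toFinset with hA
  set B := l₂.toFinset with hB
  have hAne : A.Nonempty := toFinset_nonempty hl₁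
  have hBne : B.Nonempty := toFinset_nonempty hl₂
  have sat1 : ∀ γ : Finset (Finset P), γ.Nonempty →
      (PCLsat γ (pclSum l₁) ↔ γ = A) := by
    intro γ hγ
    constructor
    · intro h; exact (pclSum_sat l₁ hl₁ γ).1 ⟨h, hγ⟩
    · rintro rfl; exact ((pclSum_sat l₁ hl₁ A).2 rfl).1
  have sat2 : ∀ γ : Finset (Finset P), γ.Nonempty →
      (PCLsat γ (pclSum l₂) ↔ γ = B) := by
    intro γ hγ
    constructor
    · intro h; exact (pclSum_sat l₂ hl₂ γ).1 ⟨h, hγ⟩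
    · rintro rfl; exact ((pclSum_sat l₂ hl₂ B).2 rfl).1
  constructor
  · intro hdisj γ hγ
    simp only [sem]
    by_cases hγeq : γ = A ∪ B
    · have hmem : (A, B) ∈ (γ.powerset ×ˢ γ.powerset).filter
          (fun p => p.1.Nonempty ∧ p.2.Nonempty ∧ Disjoint p.1 p.2 ∧ p.1 ∪ p.2 = γ) := by
        subst hγeq
        simp only [Finset.mem_filter, Finset.mem_product, Finset.mem_powerset]
        exact ⟨⟨Finset.subset_union_left, Finset.subset_union_right⟩,
          hAne, hBne, hdisj, trivial⟩
      rw [Finset.sum_eq_single_of_mem (A, B) hmem]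
      · rw [if_pos ((sat1 A hAne).2 rfl), if_pos ((sat2 B hBne).2 rfl), hpvm.ot_one]
        rw [if_pos]
        exact ⟨A, B, hAne, hBne, hγeq.symm, ((sat1 A hAne).2 rfl),
          ((sat2 B hBne).2 rfl)⟩
      · rintro ⟨p₁, p₂⟩ hp hne
        simp only [Finset.mem_filter, Finset.mem_product, Finset.mem_powerset] at hp
        obtain ⟨-, hp₁, hp₂, -, -⟩ := hp
        by_cases e1 : p₁ = A
        · by_cases e2 : p₂ = B
          · exact absurd (by rw [e1, e2]) hne
          · rw [if_neg (fun h => e2 ((sat2 p₂ hp₂).1 h)), hpvm.ot_zero]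
        · rw [if_neg (fun h => e1 ((sat1 p₁ hp₁).1 h)), hpvm.zero_ot]
    · rw [Finset.sum_eq_zero, if_neg]
      · rintro ⟨γ₁, γ₂, hγ₁, hγ₂, huni, hs₁, hs₂⟩
        exact hγeq (by rw [← huni, (sat1 γ₁ hγ₁).1 hs₁, (sat2 γ₂ hγ₂).1 hs₂])
      · rintro ⟨p₁, p₂⟩ hp
        simp only [Finset.mem_filter, Finset.mem_product, Finset.mem_powerset] at hp
        obtain ⟨-, hp₁, hp₂, -, huni⟩ := hp
        by_cases e1 : p₁ = A
        · by_cases e2 : p₂ = B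
          · exact absurd (by rw [← huni, e1, e2]) hγeq
          · rw [if_neg (fun h => e2 ((sat2 p₂ hp₂).1 h)), hpvm.ot_zero]
        · rw [if_neg (fun h => e1 ((sat1 p₁ hp₁).1 h)), hpvm.zero_ot]
  · intro hdisj γ hγ
    simp only [sem]
    apply Finset.sum_eq_zero
    rintro ⟨p₁, p₂⟩ hp
    simp only [Finset.mem_filter, Finset.mem_product, Finset.mem_powerset] at hp
    obtain ⟨-, hp₁, hp₂, hd, -⟩ := hp
    by_cases e1 : p₁ = A
    · by_cases e2 : p₂ = B
      · subst e1; subst e2; exact absurd hd hdisj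
      · rw [if_neg (fun h => e2 ((sat2 p₂ hp₂).1 h)), hpvm.ot_zero]
    · rw [if_neg (fun h => e1 ((sat1 p₁ hp₁).1 h)), hpvm.zero_ot]
end
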